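/- The binary code generated by the incidence matrix of the unit graph G(Z_5) is an [8, 4, 3] code over F_2. -/

import Mathlib

open SimpleGraph Finset
open scoped Classical

/-- The unit graph of a commutative ring: distinct `x, y` adjacent iff `x + y` is a unit. -/
def unitGraphR (R : Type*) [CommRing R] : SimpleGraph R where
  Adj x y := x ≠ y ∧ IsUnit (x + y)
  symm := ⟨fun x y ⟨h1, h2⟩ => ⟨h1.symm, by rwa [add_comm]⟩⟩
  loopless := ⟨fun x ⟨h, _⟩ => h rfl⟩

/-- The unit graph of `ZMod n`. -/
def unitGraph (n : ℕ) : SimpleGraph (ZMod n) := unitGraphR (ZMod n)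

/-- The number of edges of `G` with one endpoint in `W` and the other outside `W`. -/
noncomputable def cutSize {V : Type*} [Fintype V] (G : SimpleGraph V) (W : Finset V) : ℕ :=
  (G.edgeFinset.filter (fun e => (∃ x ∈ e, x ∈ W) ∧ (∃ x ∈ e, x ∉ W))).card

/-- The edge-connectivity of `G`: minimum cut size over nonempty proper vertex subsets. -/
noncomputable def edgeConn {V : Type*} [Fintype V] (G : SimpleGraph V) : ℕ :=
  sInf {n | ∃ W : Finset V, W.Nonempty ∧ W ≠ Finset.univ ∧ n = cutSize G W}

/-- The incidence matrix of `G` over `F_2`, rows indexed by vertices, columns by edges. -/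
noncomputable def incMat {V : Type*} [Fintype V] (G : SimpleGraph V) :
    Matrix V G.edgeFinset (ZMod 2) :=
  fun v e => if v ∈ (e : Sym2 V) then 1 else 0

/-- The binary code generated by the rows of the incidence matrix of `G`. -/
noncomputable def rowCode {V : Type*} [Fintype V] (G : SimpleGraph V) :
    Submodule (ZMod 2) (G.edgeFinset → ZMod 2) :=
  Submodule.span (ZMod 2) (Set.range (incMat G))

/-- The minimum Hamming weight of a nonzero codeword of the incidence-matrix code of `G`. -/
noncomputable def minDist {V : Type*} [Fintype V] (G : SimpleGraph V) : ℕ :=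
  sInf {w | ∃ c ∈ rowCode G, c ≠ 0 ∧ w = hammingNorm c}

/-!
Over `𝔽₂` the combination `f ᵥ* H` of the rows of the incidence matrix takes the value
`f x + f y` on the edge `xy`, so it is the indicator vector of the cut between `{v | f v = 1}`
and its complement. For a connected graph this gives the kernel of `f ↦ f ᵥ* H` (the constant
functions, so the code has dimension `|V| - 1`) and the nonzero codewords (the cuts of nonempty
proper vertex sets, so the minimum distance is the edge connectivity). The unit graph of `ℤ/5`
is `K₅` minus the edges `{1, 4}` and `{2, 3}`; it is connected because `0` is adjacent to every
other vertex, it has `8` edges, and its edge connectivity is `3`, attained by the cut around `1`.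
-/

open Matrix

namespace SimpleGraph

section Preconnected

variable {V : Type*} {G : SimpleGraph V}

theorem Preconnected.exists_adj_mem_notMem (hG : G.Preconnected) {S : Set V} {u v : V}
    (hu : u ∈ S) (hv : v ∉ S) : ∃ x ∈ S, ∃ y ∉ S, G.Adj x y := by
  obtain ⟨p⟩ := hG u v
  obtain ⟨d, -, hd₁, hd₂⟩ := p.exists_boundary_dart S hu hv
  exact ⟨_, hd₁, _, hd₂, d.adj⟩

theorem Preconnected.apply_eq_of_forall_adj {α : Type*} (hG : G.Preconnected) {f : V → α}
    (hf : ∀ x y, G.Adj x y → f x = f y) (u v : V) : f u = f v := by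
  by_contra huv
  obtain ⟨x, hx, y, hy, hxy⟩ :=
    hG.exists_adj_mem_notMem (S := {w | f w = f u}) rfl (Ne.symm huv)
  exact hy (hx ▸ (hf x y hxy).symm)

end Preconnected

variable {V : Type*} [Fintype V] (G : SimpleGraph V)

theorem cutSize_eq_card_filter_adj [DecidableEq V] (W : Finset V) :
    cutSize G W = #{p ∈ W ×ˢ Wᶜ | G.Adj p.1 p.2} := by
  refine (card_nbij (fun p => s(p.1, p.2)) ?_ ?_ ?_).symm
  · rintro ⟨x, y⟩ h
    simp only [coe_filter, mem_product, mem_compl, Set.mem_ofPred_eq] at h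
    simp [h]
  · rintro ⟨x, y⟩ h ⟨x', y'⟩ h' hxy
    simp only [coe_filter, mem_product, mem_compl, Set.mem_ofPred_eq] at h h'
    rcases Sym2.eq_iff.1 hxy with ⟨rfl, rfl⟩ | ⟨rfl, -⟩
    · rfl
    · exact absurd h.1.1 h'.1.2
  · intro e he
    induction e using Sym2.ind with | _ x y => ?_
    simp only [coe_filter, mem_edgeFinset, mem_edgeSet, Sym2.mem_iff, exists_eq_or_imp,
      exists_eq_left, Set.mem_ofPred_eq] at he
    simp only [Set.mem_image, coe_filter, mem_product, mem_compl, Set.mem_ofPred_eq,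
      Prod.exists, Sym2.eq_iff]
    by_cases hx : x ∈ W
    · exact ⟨x, y, ⟨⟨hx, by tauto⟩, he.1⟩, by simp⟩
    · exact ⟨y, x, ⟨⟨by tauto, hx⟩, he.1.symm⟩, by simp⟩

theorem Preconnected.cutSize_ne_zero_iff {G : SimpleGraph V} (hG : G.Preconnected)
    (W : Finset V) : cutSize G W ≠ 0 ↔ W.Nonempty ∧ W ≠ univ := by
  rw [cutSize_eq_card_filter_adj, ← pos_iff_ne_zero, card_pos, filter_nonempty_iff]
  constructor
  · rintro ⟨⟨x, y⟩, hxy, -⟩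
    simp only [mem_product, mem_compl] at hxy
    exact ⟨⟨x, hxy.1⟩, fun h => hxy.2 (h ▸ mem_univ y)⟩
  · rintro ⟨⟨u, hu⟩, hW⟩
    obtain ⟨v, hv⟩ : ∃ v, v ∉ W := by simpa [eq_univ_iff_forall] using hW
    obtain ⟨x, hx, y, hy, hxy⟩ := hG.exists_adj_mem_notMem (S := (W : Set V)) hu hv
    exact ⟨(x, y), by simpa using ⟨hx, hy⟩, hxy⟩

theorem vecMul_incMat_apply (f : V → ZMod 2) {x y : V} (h : s(x, y) ∈ G.edgeFinset) :
    (f ᵥ* incMat G) ⟨s(x, y), h⟩ = f x + f y := by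
  have hxy : x ≠ y := G.ne_of_adj (G.mem_edgeFinset.1 h)
  have hpair : ({v | v = x ∨ v = y} : Finset V) = {x, y} := by ext; simp
  simp [vecMul, dotProduct, incMat, sum_ite, hpair, sum_pair hxy]

theorem vecMul_incMat_eq_zero_iff (f : V → ZMod 2) :
    f ᵥ* incMat G = 0 ↔ ∀ x y, G.Adj x y → f x = f y := by
  constructor
  · intro h x y hxy
    rw [← CharTwo.add_eq_zero, ← vecMul_incMat_apply G f (G.mem_edgeFinset.2 hxy), h,
      Pi.zero_apply]
  · intro h
    ext ⟨e, he⟩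
    induction e using Sym2.ind with | _ x y => ?_
    rw [vecMul_incMat_apply, Pi.zero_apply, CharTwo.add_eq_zero]
    exact h x y (G.mem_edgeFinset.1 he)

theorem hammingNorm_vecMul_incMat (f : V → ZMod 2) :
    hammingNorm (f ᵥ* incMat G) = cutSize G {v | f v ≠ 0} := by
  have hcross (e : G.edgeFinset) : (f ᵥ* incMat G) e ≠ 0 ↔
      (∃ x ∈ (e : Sym2 V), x ∈ ({v | f v ≠ 0} : Finset V)) ∧
        ∃ x ∈ (e : Sym2 V), x ∉ ({v | f v ≠ 0} : Finset V) := by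
    obtain ⟨e, he⟩ := e
    induction e using Sym2.ind with | _ x y => ?_
    have hZMod2 : ∀ a b : ZMod 2, a + b ≠ 0 ↔ (a ≠ 0 ∨ b ≠ 0) ∧ (a = 0 ∨ b = 0) := by decide
    simpa [vecMul_incMat_apply] using hZMod2 (f x) (f y)
  refine card_nbij Subtype.val (fun e he => ?_) Subtype.val_injective.injOn fun e he => ?_
  · exact mem_filter.2 ⟨e.2, (hcross e).1 (mem_filter.1 he).2⟩
  · obtain ⟨he, hW⟩ := mem_filter.1 he
    exact ⟨⟨e, he⟩, mem_filter.2 ⟨mem_univ _, (hcross ⟨e, he⟩).2 hW⟩, rfl⟩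

theorem rowCode_eq_range : rowCode G = LinearMap.range (incMat G).vecMulLinear := by
  rw [rowCode, range_vecMulLinear]
  rfl

theorem Connected.ker_vecMulLinear_incMat {G : SimpleGraph V} (hG : G.Connected) :
    LinearMap.ker (incMat G).vecMulLinear = (ZMod 2) ∙ 1 := by
  ext f
  rw [LinearMap.mem_ker, vecMulLinear_apply, vecMul_incMat_eq_zero_iff,
    Submodule.mem_span_singleton]
  constructor
  · intro h
    obtain ⟨v⟩ := hG.nonempty
    exact ⟨f v, funext fun w => by simpa using hG.preconnected.apply_eq_of_forall_adj h v w⟩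
  · rintro ⟨c, rfl⟩ x y -
    rfl

theorem Connected.finrank_rowCode {G : SimpleGraph V} (hG : G.Connected) :
    Module.finrank (ZMod 2) (rowCode G) = Fintype.card V - 1 := by
  have := hG.nonempty
  have h := LinearMap.finrank_range_add_finrank_ker (incMat G).vecMulLinear
  rw [← rowCode_eq_range, hG.ker_vecMulLinear_incMat, finrank_span_singleton one_ne_zero,
    Module.finrank_fintype_fun_eq_card] at h
  omega

theorem Connected.minDist_eq_edgeConn {G : SimpleGraph V} (hG : G.Connected) :
    minDist G = edgeConn G := by
  unfold minDist edgeConn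
  congr 1
  ext n
  simp only [Set.mem_ofPred_eq, rowCode_eq_range, LinearMap.mem_range, vecMulLinear_apply]
  constructor
  · rintro ⟨_, ⟨f, rfl⟩, hf, rfl⟩
    rw [← hammingNorm_ne_zero_iff, hammingNorm_vecMul_incMat,
      hG.preconnected.cutSize_ne_zero_iff] at hf
    exact ⟨_, hf.1, hf.2, hammingNorm_vecMul_incMat G f⟩
  · rintro ⟨W, hne, hW, rfl⟩
    have hind : ({v | (if v ∈ W then 1 else 0 : ZMod 2) ≠ 0} : Finset V) = W := by ext; simp
    refine ⟨_, ⟨fun v => if v ∈ W then 1 else 0, rfl⟩, ?_, ?_⟩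
    · rw [← hammingNorm_ne_zero_iff, hammingNorm_vecMul_incMat, hind,
        hG.preconnected.cutSize_ne_zero_iff]
      exact ⟨hne, hW⟩
    · rw [hammingNorm_vecMul_incMat, hind]

end SimpleGraph

theorem unitGraphR_connected (K : Type*) [Field K] : (unitGraphR K).Connected := by
  rw [connected_iff_exists_forall_reachable]
  refine ⟨0, fun x => ?_⟩
  rcases eq_or_ne x 0 with rfl | hx
  · rfl
  · exact Adj.reachable ⟨hx.symm, by simpa using hx⟩

theorem unitGraph_adj_iff {p : ℕ} [Fact p.Prime] {x y : ZMod p} :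
    (unitGraph p).Adj x y ↔ x ≠ y ∧ x + y ≠ 0 := by
  simp [unitGraph, unitGraphR]

instance Nat.fact_prime_five : Fact (Nat.Prime 5) := ⟨Nat.prime_five⟩

theorem unitGraph_five_card_edgeFinset : #(unitGraph 5).edgeFinset = 8 := by
  have h := (unitGraph 5).sum_degrees_eq_twice_card_edges
  simp only [← card_neighborFinset_eq_degree, neighborFinset_eq_filter, unitGraph_adj_iff] at h
  have h16 : ∑ v : ZMod 5, #{x | v ≠ x ∧ v + x ≠ 0} = 16 := by decide
  omega

theorem unitGraph_five_edgeConn : edgeConn (unitGraph 5) = 3 := by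
  have hcut (W : Finset (ZMod 5)) :
      cutSize (unitGraph 5) W = #{p ∈ W ×ˢ Wᶜ | p.1 ≠ p.2 ∧ p.1 + p.2 ≠ 0} := by
    simp only [cutSize_eq_card_filter_adj, unitGraph_adj_iff]
  have hmem : 3 ∈ {n | ∃ W : Finset (ZMod 5), W.Nonempty ∧ W ≠ univ ∧
      n = cutSize (unitGraph 5) W} :=
    ⟨{1}, by decide, by decide, by rw [hcut]; decide⟩
  refine le_antisymm (Nat.sInf_le hmem) (le_csInf ⟨3, hmem⟩ ?_)
  rintro _ ⟨W, hne, hW, rfl⟩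
  rw [hcut]
  revert W
  decide

theorem unitGraph_ZMod_five_code_params :
    (unitGraph 5).edgeFinset.card = 8 ∧
      Module.finrank (ZMod 2) (rowCode (unitGraph 5)) = 4 ∧
      minDist (unitGraph 5) = 3 := by
  have hG : (unitGraph 5).Connected := unitGraphR_connected (ZMod 5)
  refine ⟨unitGraph_five_card_edgeFinset, ?_, ?_⟩
  · rw [hG.finrank_rowCode, ZMod.card]
  · rw [hG.minDist_eq_edgeConn, unitGraph_five_edgeConn]
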